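/- Let f : (𝔽₂)ⁿ → 𝔽₂ admit a layer representation with layers L₁,…,L_r of sizes ℓ₁,…,ℓ_r, canalizing inputs (a_j), and let k ∈ L_ρ for some 1 ≤ ρ ≤ r. Suppose that the function g, obtained from f by substituting the non-canalizing value a_j + 1 for the variable x_j for every j ∈ (L₁ ∪ ⋯ ∪ L_ρ) \ {k}, equals x_k or x_k + 1 identically as a function of the remaining variables. Then the bound of the edge-deletion theorem is attained exactly: the number of states x ∈ (𝔽₂)ⁿ with f(x[k := 0]) ≠ f(x) equals 2^{n − (ℓ₁ + ℓ₂ + ⋯ + ℓ_ρ)}. -/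

import Mathlib

/-!
A state `x` is flipped by setting `x_k := 0` exactly when `x_k = 1` and `x_j = a_j + 1` for all
other `j ∈ L₁ ∪ ⋯ ∪ L_ρ`. If instead some such `j ≠ k` takes its canalizing value `a_j`, its layer
`M_i` vanishes, the nested form is cut off there, and `x_k` does not occur in the layers before
`i ≤ ρ`, so `f` ignores `x_k`. On the remaining states the hypothesis makes `f = x_k + const`.
The flipped states thus form a subcube of codimension `ℓ₁ + ⋯ + ℓ_ρ`.
-/

/-- Evaluation of the nested expression built from a list of (already evaluated)
extended monomial values `[M₁, …, M_r]` and a core value `p`: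
`nestAux [] p = p` and `nestAux (m :: ms) p = m * nestAux ms p + 1`.
With this convention, the layer form
`f = M₁(M₂(⋯(M_{r−1}(M_r·P_c + 1) + 1)⋯) + 1) + b` equals
`nestAux [M₁,…,M_r] P_c + 1 + b` in `ZMod 2`. -/
def nestAux : List (ZMod 2) → ZMod 2 → ZMod 2
  | [], p => p
  | m :: ms, p => m * nestAux ms p + 1

/-- A layer representation of a Boolean function `f : (𝔽₂)ⁿ → 𝔽₂`: `r ≥ 1` pairwise
disjoint nonempty layers `L₁,…,L_r` of variable indices, canalizing inputs `a j`,
a constant `b`, and a core function `Pc` depending only on the variables outside all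
layers and having no canalizing variables (or being the constant `1`), such that
`f(x) = M₁(M₂(⋯(M_{r−1}(M_r·P_c + 1) + 1)⋯) + 1) + b`
where `M_i = ∏_{j ∈ L_i} (x_j + a_j)`, all arithmetic in `𝔽₂ = ZMod 2`. -/
structure LayerRep (n : ℕ) (f : (Fin n → ZMod 2) → ZMod 2) where
  r : ℕ
  r_pos : 0 < r
  L : Fin r → Finset (Fin n)
  a : Fin n → ZMod 2
  b : ZMod 2
  Pc : (Fin n → ZMod 2) → ZMod 2
  layers_nonempty : ∀ i, (L i).Nonempty
  layers_disjoint : ∀ i j, i ≠ j → Disjoint (L i) (L j)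
  Pc_depends : ∀ x y : Fin n → ZMod 2,
    (∀ j : Fin n, (∀ i, j ∉ L i) → x j = y j) → Pc x = Pc y
  Pc_noncanalizing : (∀ x, Pc x = 1) ∨
    (∀ (j : Fin n) (c d : ZMod 2), ¬ ∀ x, x j = c → Pc x = d)
  repr_eq : ∀ x, f x =
    nestAux (List.ofFn fun i => ∏ j ∈ L i, (x j + a j)) (Pc x) + 1 + b

theorem nestAux_append_zero_cons (l m : List (ZMod 2)) (p : ZMod 2) :
    nestAux (l ++ 0 :: m) p = nestAux l 1 := by
  induction l with
  | nil => simp [nestAux]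
  | cons c l ih => simp [nestAux, ih]

theorem nestAux_eq_take_of_getElem_eq_zero {l : List (ZMod 2)} {i : ℕ} (hi : i < l.length)
    (h : l[i] = 0) (p : ZMod 2) : nestAux l p = nestAux (l.take i) 1 := by
  rw [← nestAux_append_zero_cons _ (l.drop (i + 1)) p, ← h, ← List.drop_eq_getElem_cons,
    List.take_append_drop]

theorem Fintype.card_filter_forall_mem_eq {ι α : Type*} [Fintype ι] [DecidableEq ι] [Fintype α]
    (S : Finset ι) (g : ι → α) [DecidablePred fun x : ι → α => ∀ j ∈ S, x j = g j] :
    (Finset.univ.filter fun x : ι → α => ∀ j ∈ S, x j = g j).card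
      = Fintype.card α ^ (Fintype.card ι - S.card) := by
  have hpi : (Finset.univ.filter fun x : ι → α => ∀ j ∈ S, x j = g j)
      = Fintype.piFinset fun j => if j ∈ S then {g j} else Finset.univ := by
    ext x
    simp only [Finset.mem_filter, Finset.mem_univ, true_and, Fintype.mem_piFinset]
    refine forall_congr' fun j => ?_
    split_ifs <;> simp [*]
  simp [hpi, apply_ite Finset.card, Finset.prod_ite, Finset.filter_notMem_eq_sdiff,
    Finset.card_univ_sdiff]

theorem ZMod.two_eq_of_ne_add_one {a b : ZMod 2} (h : a ≠ b + 1) : a = b := by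
  revert a b h
  decide

theorem apply_update_ne_of_eq_add_const {n : ℕ} {f : (Fin n → ZMod 2) → ZMod 2}
    {T : Finset (Fin n)} {c : Fin n → ZMod 2} {k : Fin n} (hkT : k ∉ T) (e : ZMod 2)
    (hf : ∀ x : Fin n → ZMod 2, f (fun j => if j ∈ T then c j else x j) = x k + e)
    {x : Fin n → ZMod 2} (hx : ∀ j ∈ T, x j = c j) (hxk : x k = 1) :
    f (Function.update x k 0) ≠ f x := by
  have hfix : ∀ y : Fin n → ZMod 2, (∀ j ∈ T, y j = c j) → f y = y k + e := fun y hy => by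
    rw [← hf y]
    congr 1
    ext j
    split_ifs with hj
    exacts [hy j hj, rfl]
  rw [hfix _ fun j hj => by rw [Function.update_of_ne (ne_of_mem_of_not_mem hj hkT), hx j hj],
    hfix x hx, Function.update_self, hxk]
  simp

namespace LayerRep

variable {n : ℕ} {f : (Fin n → ZMod 2) → ZMod 2} (R : LayerRep n f)

def monomial (i : Fin R.r) (x : Fin n → ZMod 2) : ZMod 2 :=
  ∏ j ∈ R.L i, (x j + R.a j)

theorem apply_eq (x : Fin n → ZMod 2) :
    f x = nestAux (List.ofFn fun i => R.monomial i x) (R.Pc x) + 1 + R.b :=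
  R.repr_eq x

theorem monomial_eq_zero {i : Fin R.r} {j : Fin n} (hj : j ∈ R.L i) {x : Fin n → ZMod 2}
    (hx : x j = R.a j) : R.monomial i x = 0 :=
  Finset.prod_eq_zero hj (by rw [hx, CharTwo.add_self_eq_zero])

theorem apply_eq_of_canalized {x y : Fin n → ZMod 2} (i : Fin R.r)
    (hbefore : ∀ i' < i, ∀ j ∈ R.L i', x j = y j) {j : Fin n} (hj : j ∈ R.L i)
    (hx : x j = R.a j) (hy : y j = R.a j) : f x = f y := by
  have hcut : ∀ z : Fin n → ZMod 2, z j = R.a j →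
      f z = nestAux ((List.ofFn fun i => R.monomial i z).take i) 1 + 1 + R.b := fun z hz => by
    have hzero : (List.ofFn fun i => R.monomial i z)[(i : ℕ)]'(by simp) = 0 := by
      simpa using R.monomial_eq_zero hj hz
    rw [R.apply_eq z, nestAux_eq_take_of_getElem_eq_zero _ hzero]
  rw [hcut x hx, hcut y hy]
  congr 3
  refine List.ext_getElem (by simp) fun m hmx _ => ?_
  have hm : m < i := by simpa using hmx
  simp only [List.getElem_take, List.getElem_ofFn, monomial]
  exact Finset.prod_congr rfl fun j' hj' => by rw [hbefore ⟨m, by omega⟩ hm j' hj']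

theorem apply_update_eq_of_canalized {k : Fin n} {ρ : Fin R.r} (hk : k ∈ R.L ρ)
    {i : Fin R.r} (hiρ : i ≤ ρ) {j : Fin n} (hj : j ∈ R.L i) (hjk : j ≠ k)
    {x : Fin n → ZMod 2} (hx : x j = R.a j) : f (Function.update x k 0) = f x := by
  refine R.apply_eq_of_canalized i (fun i' hi' j' hj' => ?_) hj
    (by rwa [Function.update_of_ne hjk]) hx
  have hk' : k ∉ R.L i' :=
    Finset.disjoint_left.1 (R.layers_disjoint ρ i' (hi'.trans_le hiρ).ne') hk
  rw [Function.update_of_ne (ne_of_mem_of_not_mem hj' hk')]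

theorem apply_update_ne_iff {k : Fin n} {ρ : Fin R.r} (hk : k ∈ R.L ρ) {e : ZMod 2}
    (he : ∀ x : Fin n → ZMod 2,
      f (fun j => if j ∈ (Finset.Iic ρ).biUnion R.L \ {k} then R.a j + 1 else x j) = x k + e)
    (x : Fin n → ZMod 2) :
    f (Function.update x k 0) ≠ f x ↔
      ∀ j ∈ (Finset.Iic ρ).biUnion R.L, x j = Function.update (fun j => R.a j + 1) k 1 j := by
  constructor
  · intro hne j hj
    by_contra hxj
    by_cases hjk : j = k
    · subst hjk
      rw [Function.update_self] at hxj
      have hx0 : x j = 0 := ZMod.two_eq_of_ne_add_one (by rwa [zero_add])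
      exact hne (by rw [← hx0, Function.update_eq_self])
    · rw [Function.update_of_ne hjk] at hxj
      obtain ⟨i, hi, hji⟩ := Finset.mem_biUnion.1 hj
      exact hne (R.apply_update_eq_of_canalized hk (Finset.mem_Iic.1 hi) hji hjk
        (ZMod.two_eq_of_ne_add_one hxj))
  · intro hx
    have hkS : k ∈ (Finset.Iic ρ).biUnion R.L :=
      Finset.mem_biUnion.2 ⟨ρ, Finset.mem_Iic.2 le_rfl, hk⟩
    refine apply_update_ne_of_eq_add_const (by simp) e he (fun j hj => ?_)
      (by simpa using hx k hkS)
    obtain ⟨hjS, hjk⟩ := Finset.mem_sdiff.1 hj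
    rw [hx j hjS, Function.update_of_ne (Finset.notMem_singleton.1 hjk)]

end LayerRep

/-- Sharpness of the bound in Method 2(a): let `x_k` be a canalizing variable of `f`
lying in the `ρ`-th layer (`0`-indexed here).  If the function obtained from `f` by
substituting the non-canalizing value `a_j + 1` for the variable `x_j`, for every
`j ∈ (L₁ ∪ ⋯ ∪ L_ρ) \ {k}`, equals `x_k` or `x_k + 1` identically, then the number of
states `x` with `f(x[k := 0]) ≠ f(x)` is exactly `2 ^ (n − (ℓ₁ + ⋯ + ℓ_ρ))`. -/
theorem edge_deletion_change_bound_sharp {n : ℕ}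
    (f : (Fin n → ZMod 2) → ZMod 2) (R : LayerRep n f)
    (k : Fin n) (ρ : Fin R.r) (hk : k ∈ R.L ρ)
    (hsub :
      (∀ x : Fin n → ZMod 2,
        f (fun j => if j ∈ (Finset.Iic ρ).biUnion R.L \ {k} then R.a j + 1 else x j)
          = x k) ∨
      (∀ x : Fin n → ZMod 2,
        f (fun j => if j ∈ (Finset.Iic ρ).biUnion R.L \ {k} then R.a j + 1 else x j)
          = x k + 1)) :
    (Finset.univ.filter fun x : Fin n → ZMod 2 =>
        f (Function.update x k 0) ≠ f x).card
      = 2 ^ (n - ∑ i ∈ Finset.Iic ρ, (R.L i).card) := by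
  obtain ⟨e, he⟩ : ∃ e : ZMod 2, ∀ x : Fin n → ZMod 2,
      f (fun j => if j ∈ (Finset.Iic ρ).biUnion R.L \ {k} then R.a j + 1 else x j) = x k + e :=
    hsub.elim (fun h => ⟨0, by simpa using h⟩) fun h => ⟨1, h⟩
  rw [Finset.filter_congr fun x _ => R.apply_update_ne_iff hk he x,
    Fintype.card_filter_forall_mem_eq, ZMod.card, Fintype.card_fin,
    Finset.card_biUnion fun i _ i' _ h => R.layers_disjoint i i' h]
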